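/- Let p be an odd prime and let n be an odd positive integer such that gcd(n, p−1) = 1 and rad(2n) = rad(p+1) (i.e., 2·rad(n) = rad(p+1) where rad denotes the product of distinct prime factors). Then gcd(n + p − 1, p² − 1) = 1. -/
import Mathlib


theorem stmt_8 (p n : ℕ) (hp : p.Prime) (hodd : Odd p) (hn : 0 < n) (hoddn : Odd n)
    (hgcd : Nat.gcd n (p - 1) = 1)
    (hrad : (2 * n).primeFactors.prod id = (p + 1).primeFactors.prod id) :
    Nat.gcd (n + p - 1) (p ^ 2 - 1) = 1 := by
  have hp3 : 3 ≤ p := by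
    rcases hodd with ⟨k, hk⟩
    have := hp.two_le
    omega
  by_contra h
  obtain ⟨q, hq, hqd⟩ := Nat.exists_prime_and_dvd h
  have hq1 : q ∣ n + p - 1 := hqd.trans (Nat.gcd_dvd_left _ _)
  have hq2 : q ∣ p ^ 2 - 1 := hqd.trans (Nat.gcd_dvd_right _ _)
  have hfac : p ^ 2 - 1 = (p + 1) * (p - 1) := by
    have := Nat.sq_sub_sq p 1
    simpa using this
  rw [hfac] at hq2
  have hsum : n + p - 1 = n + (p - 1) := by omega
  rcases (hq.dvd_mul.mp hq2) with hc | hc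
  · -- q ∣ p + 1
    have hmem : q ∈ (p + 1).primeFactors := Nat.mem_primeFactors.mpr ⟨hq, hc, by omega⟩
    have hdp : q ∣ (p + 1).primeFactors.prod id := Finset.dvd_prod_of_mem id hmem
    rw [← hrad] at hdp
    have h2n : q ∣ 2 * n := hdp.trans (Nat.prod_primeFactors_dvd _)
    rcases hq.dvd_mul.mp h2n with h2 | hn'
    · -- q = 2, but n + p - 1 is odd
      have hq2' : q = 2 := (Nat.prime_dvd_prime_iff_eq hq Nat.prime_two).mp h2
      rw [hq2'] at hq1
      rcases hodd with ⟨a, ha⟩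
      rcases hoddn with ⟨b, hb⟩
      omega
    · -- q ∣ n, and q ∣ n + (p-1), so q ∣ p - 1
      have hqp : q ∣ p - 1 := by
        have := Nat.dvd_sub (hsum ▸ hq1) hn'
        simpa using this
      have : q ∣ 1 := hgcd ▸ Nat.dvd_gcd hn' hqp
      exact hq.one_lt.ne' (Nat.dvd_one.mp this)
  · -- q ∣ p - 1, then q ∣ n
    have hqn : q ∣ n := by
      have := Nat.dvd_sub (hsum ▸ hq1) hc
      simpa using this
    have : q ∣ 1 := hgcd ▸ Nat.dvd_gcd hqn hc
    exact hq.one_lt.ne' (Nat.dvd_one.mp this)
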